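/- Let 𝔸 be a finite-dimensional associative ℂ-algebra (not necessarily commutative) and φ : 𝔸 → ℂ a linear form with φ(vw) = φ(wv) for all v, w ∈ 𝔸 and such that ⟨v, w⟩ := φ(vw) is nondegenerate, and let (e_i)_{i∈I} be an orthonormal basis: φ(e_i e_j) = δ_{i,j}. Let λ_A, λ_B, λ_C be central elements of 𝔸 with λ_B² + λ_A λ_C = 0. Writing [v,w] := vw − wv and {v,w} := vw + wv, define A^i_{j,k} := φ(λ_A {e_j, e_k} e_i), B^i_{j,k} := φ(λ_B [e_i, e_j] e_k), C^i_{j,k} := φ(λ_C {e_i, e_j} e_k). Then: A^i_{j,k} is fully symmetric under permutations of (i,j,k), C^i_{j,k} = C^i_{k,j}, and the relations (BB-AC), (BC), (BA) hold; moreover a family D = (D^a)_{a∈I} of complex scalars satisfies the (D) relation if and only if φ(λ_B (Σ_a D^a e_a) [v, w]) = 0 for all v, w ∈ 𝔸, i.e. λ_B·(Σ_a D^a e_a) lies in the orthogonal complement of the span of all commutators [𝔸, 𝔸]. -/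

import Mathlib

/-!
Since `φ (e i * e j) = δ i j`, the `a`-th coordinate of `u` is `φ (u * e a)`, so contracting two
of the tensors over a repeated index gives the pairing `φ (u * w)` of the two elements of `𝔸`
whose coordinates they are; cyclicity of `φ` and centrality of the weights bring the contracted
index to the front of each tensor. Each of (BB-AC), (BC), (BA) thereby becomes the symmetry in
`x, y` of `ψ (P x y z w)` for the trace `ψ = φ (λ * ·)`, `λ ∈ {λ_B², λ_B λ_C, λ_B λ_A}`
(`λ_B² + λ_A λ_C = 0` turns the `C A` term of (BB-AC) into a `λ_B²` term), and these identities
hold because every monomial is a cyclic rotation of one starting with `x`. In (D) the `C A` term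
`φ (λ_C λ_A Σ_a {e_i, e_a} {e_j, e_a})` is symmetric in `i, j`, so (D) says that the antisymmetric
`B D` term `φ (λ_B d [e_i, e_j])` vanishes, which extends bilinearly to all commutators.
-/

section Relations

variable {I : Type*} [Fintype I]

/-- The **BB-AC** relation. -/
def RelBBAC (A B C : I → I → I → ℂ) : Prop :=
  ∀ i j k l, ∑ a, (B i j a * B a k l + B i k a * B j a l + C i l a * A j a k)
    = ∑ a, (B j i a * B a k l + B j k a * B i a l + C j l a * A i a k)

/-- The **BC** relation. -/
def RelBC (B C : I → I → I → ℂ) : Prop :=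
  ∀ i j k l, ∑ a, (B i j a * C a k l + C i k a * B j a l + C i l a * B j a k)
    = ∑ a, (B j i a * C a k l + C j k a * B i a l + C j l a * B i a k)

/-- The **BA** relation. -/
def RelBA (A B : I → I → I → ℂ) : Prop :=
  ∀ i j k l, ∑ a, (B i j a * A a k l + B i k a * A j a l + B i l a * A j a k)
    = ∑ a, (B j i a * A a k l + B j k a * A i a l + B j l a * A i a k)

/-- The **D** relation. -/
def RelD (A B C : I → I → I → ℂ) (D : I → ℂ) : Prop :=
  ∀ i j, (∑ a, B i j a * D a) + (1 / 2) * ∑ a, ∑ b, C i a b * A j a b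
    = (∑ a, B j i a * D a) + (1 / 2) * ∑ a, ∑ b, C j a b * A i a b

end Relations

section TraceForm

variable {R 𝔸 : Type*} [CommRing R] [NonUnitalRing 𝔸] [Module R 𝔸] {φ : 𝔸 →ₗ[R] R}

theorem trace_rotate (htr : ∀ v w, φ (v * w) = φ (w * v)) (a b c d : 𝔸) :
    φ (a * (b * (c * d))) = φ (b * (c * (d * a))) := by
  rw [htr, mul_assoc, mul_assoc]

theorem trace_identity_BBAC (htr : ∀ v w, φ (v * w) = φ (w * v)) (x y z w : 𝔸) :
    φ ((x*y - y*x) * (z*w - w*z)) + φ ((x*z - z*x) * (w*y - y*w)) - φ ((x*w + w*x) * (z*y + y*z))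
      = φ ((y*x - x*y) * (z*w - w*z)) + φ ((y*z - z*y) * (w*x - x*w))
        - φ ((y*w + w*y) * (z*x + x*z)) := by
  simp only [mul_sub, sub_mul, mul_add, add_mul, map_sub, map_add, mul_assoc]
  grind [trace_rotate htr]

theorem trace_identity_BC (htr : ∀ v w, φ (v * w) = φ (w * v)) (x y z w : 𝔸) :
    φ ((x*y - y*x) * (z*w + w*z)) + φ ((x*z + z*x) * (w*y - y*w)) + φ ((x*w + w*x) * (z*y - y*z))
      = φ ((y*x - x*y) * (z*w + w*z)) + φ ((y*z + z*y) * (w*x - x*w))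
        + φ ((y*w + w*y) * (z*x - x*z)) := by
  simp only [mul_sub, sub_mul, mul_add, add_mul, map_sub, map_add, mul_assoc]
  grind [trace_rotate htr]

theorem trace_identity_BA (htr : ∀ v w, φ (v * w) = φ (w * v)) (x y z w : 𝔸) :
    φ ((x*y - y*x) * (z*w + w*z)) + φ ((x*z - z*x) * (w*y + y*w)) + φ ((x*w - w*x) * (z*y + y*z))
      = φ ((y*x - x*y) * (z*w + w*z)) + φ ((y*z - z*y) * (w*x + x*w))
        + φ ((y*w - w*y) * (z*x + x*z)) := by
  simp only [sub_mul, mul_add, map_sub, map_add, mul_assoc]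
  grind [trace_rotate htr]

variable {c : 𝔸}

theorem trace_central_mul_comm (htr : ∀ v w, φ (v * w) = φ (w * v))
    (hc : ∀ v, Commute c v) (x y : 𝔸) : φ (c * (x * y)) = φ (c * (y * x)) := by
  rw [← mul_assoc, htr, ← mul_assoc, ← (hc y).eq, mul_assoc]

theorem trace_central_mul_mul_mul (hc : ∀ v, Commute c v) (x z w : 𝔸) :
    φ (c * (x * z) * w) = φ (x * (c * (z * w))) := by
  rw [← mul_assoc c, (hc x).eq, mul_assoc, mul_assoc]

theorem trace_central_mul_mul_mul' (htr : ∀ v w, φ (v * w) = φ (w * v))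
    (hc : ∀ v, Commute c v) (x z w : 𝔸) :
    φ (c * (z * x) * w) = φ (x * (c * (w * z))) := by
  rw [← mul_assoc c z x, mul_assoc, htr, mul_assoc, ← mul_assoc w, ← (hc w).eq, mul_assoc]

theorem trace_central_mul_commutator_mul (htr : ∀ v w, φ (v * w) = φ (w * v))
    (hc : ∀ v, Commute c v) (x z w : 𝔸) :
    φ (c * (x * z - z * x) * w) = φ (x * (c * (z * w - w * z))) := by
  simp only [mul_sub, sub_mul, map_sub, trace_central_mul_mul_mul hc x,
    trace_central_mul_mul_mul' htr hc x]

theorem trace_central_mul_commutator_mul' (htr : ∀ v w, φ (v * w) = φ (w * v))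
    (hc : ∀ v, Commute c v) (x z w : 𝔸) :
    φ (c * (z * x - x * z) * w) = φ (x * (c * (w * z - z * w))) := by
  simp only [mul_sub, sub_mul, map_sub, trace_central_mul_mul_mul hc x,
    trace_central_mul_mul_mul' htr hc x]

theorem trace_central_mul_anticommutator_mul (htr : ∀ v w, φ (v * w) = φ (w * v))
    (hc : ∀ v, Commute c v) (x z w : 𝔸) :
    φ (c * (x * z + z * x) * w) = φ (x * (c * (z * w + w * z))) := by
  simp only [mul_add, add_mul, map_add, trace_central_mul_mul_mul hc x,
    trace_central_mul_mul_mul' htr hc x]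

theorem trace_central_mul_anticommutator_mul' (htr : ∀ v w, φ (v * w) = φ (w * v))
    (hc : ∀ v, Commute c v) (x z w : 𝔸) :
    φ (c * (z * x + x * z) * w) = φ (x * (c * (w * z + z * w))) := by
  simp only [mul_add, add_mul, map_add, trace_central_mul_mul_mul hc x,
    trace_central_mul_mul_mul' htr hc x]

end TraceForm

section Basis

variable {R 𝔸 I : Type*} [CommRing R] [NonUnitalRing 𝔸] [Module R 𝔸] [SMulCommClass R 𝔸 𝔸]
  [Fintype I] {φ : 𝔸 →ₗ[R] R}

theorem sum_trace_mul_mul_eq_trace_mul_sum_smul (e : I → 𝔸) (u : 𝔸) (d : I → R) :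
    ∑ a, φ (u * e a) * d a = φ (u * ∑ a, d a • e a) := by
  simp only [Finset.mul_sum, mul_smul_comm, map_sum, map_smul, smul_eq_mul, mul_comm]

variable [DecidableEq I] {e : Module.Basis I R 𝔸}

theorem Module.Basis.repr_eq_trace (horth : ∀ i j, φ (e i * e j) = if i = j then 1 else 0)
    (v : 𝔸) (a : I) : e.repr v a = φ (e a * v) := by
  conv_rhs => rw [← e.sum_repr v, ← sum_trace_mul_mul_eq_trace_mul_sum_smul]
  simp [horth]

theorem sum_trace_mul_basis_mul (horth : ∀ i j, φ (e i * e j) = if i = j then 1 else 0)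
    (u w : 𝔸) : ∑ a, φ (u * e a) * φ (e a * w) = φ (u * w) := by
  conv_rhs => rw [← e.sum_repr w, ← sum_trace_mul_mul_eq_trace_mul_sum_smul]
  simp only [e.repr_eq_trace horth]

end Basis

section Commutators

variable {R 𝔸 I : Type*} [CommRing R] [NonUnitalRing 𝔸] [Module R 𝔸] [SMulCommClass R 𝔸 𝔸]
  [IsScalarTower R 𝔸 𝔸] {φ : 𝔸 →ₗ[R] R} {e : Module.Basis I R 𝔸}

theorem forall_trace_mul_commutator_eq_zero_iff (x : 𝔸) :
    (∀ v w, φ (x * (v * w - w * v)) = 0) ↔ ∀ i j, φ (x * (e i * e j - e j * e i)) = 0 := by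
  let β : 𝔸 →ₗ[R] 𝔸 →ₗ[R] R :=
    (LinearMap.mul R 𝔸 - (LinearMap.mul R 𝔸).flip).compr₂ (φ ∘ₗ LinearMap.mulLeft R x)
  have hβ : ∀ v w, β v w = φ (x * (v * w - w * v)) := fun _ _ => rfl
  simp only [← hβ]
  refine ⟨fun h i j => h _ _, fun h v w => ?_⟩
  have hβ0 : β = 0 := LinearMap.ext_basis e e fun i j => h i j
  exact LinearMap.congr_fun₂ hβ0 v w

end Commutators

section Tensors

variable {R 𝔸 I : Type*} [CommRing R] [NonUnitalRing 𝔸] [Module R 𝔸]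

-- Reducible, so that an entry with last index `a` unifies with `φ (u * e a)` in the contraction
-- lemmas below.
abbrev frobeniusA (φ : 𝔸 →ₗ[R] R) (e : I → 𝔸) (lA : 𝔸) (i j k : I) : R :=
  φ (lA * (e j * e k + e k * e j) * e i)

abbrev frobeniusB (φ : 𝔸 →ₗ[R] R) (e : I → 𝔸) (lB : 𝔸) (i j k : I) : R :=
  φ (lB * (e i * e j - e j * e i) * e k)

abbrev frobeniusC (φ : 𝔸 →ₗ[R] R) (e : I → 𝔸) (lC : 𝔸) (i j k : I) : R :=
  φ (lC * (e i * e j + e j * e i) * e k)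

variable {φ : 𝔸 →ₗ[R] R} {e : I → 𝔸} {lA lB lC : 𝔸}

theorem frobeniusA_comm_upper (htr : ∀ v w, φ (v * w) = φ (w * v)) (hcA : ∀ v, Commute lA v)
    (i j k : I) : frobeniusA φ e lA i j k = frobeniusA φ e lA j i k := by
  rw [frobeniusA, frobeniusA, trace_central_mul_anticommutator_mul htr hcA, htr, add_comm]

theorem frobeniusC_comm_lower (htr : ∀ v w, φ (v * w) = φ (w * v)) (hcC : ∀ v, Commute lC v)
    (i j k : I) : frobeniusC φ e lC i j k = frobeniusC φ e lC i k j := by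
  rw [frobeniusC, frobeniusC, trace_central_mul_anticommutator_mul htr hcC,
    trace_central_mul_anticommutator_mul htr hcC, add_comm]

end Tensors

section Contractions

variable {R 𝔸 I : Type*} [CommRing R] [NonUnitalRing 𝔸] [Module R 𝔸] [SMulCommClass R 𝔸 𝔸]
  [Fintype I] [DecidableEq I] {φ : 𝔸 →ₗ[R] R} {e : Module.Basis I R 𝔸} {lA lB lC : 𝔸}

theorem sum_mul_frobeniusB_upper (htr : ∀ v w, φ (v * w) = φ (w * v))
    (horth : ∀ i j, φ (e i * e j) = if i = j then 1 else 0) (hcB : ∀ v, Commute lB v)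
    (u : 𝔸) (k l : I) :
    ∑ a, φ (u * e a) * frobeniusB φ e lB a k l = φ (u * (lB * (e k * e l - e l * e k))) := by
  simp only [frobeniusB, trace_central_mul_commutator_mul htr hcB, sum_trace_mul_basis_mul horth]

theorem sum_mul_frobeniusB_lower (htr : ∀ v w, φ (v * w) = φ (w * v))
    (horth : ∀ i j, φ (e i * e j) = if i = j then 1 else 0) (hcB : ∀ v, Commute lB v)
    (u : 𝔸) (j l : I) :
    ∑ a, φ (u * e a) * frobeniusB φ e lB j a l = φ (u * (lB * (e l * e j - e j * e l))) := by
  simp only [frobeniusB, trace_central_mul_commutator_mul' htr hcB, sum_trace_mul_basis_mul horth]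

theorem sum_mul_frobeniusC_upper (htr : ∀ v w, φ (v * w) = φ (w * v))
    (horth : ∀ i j, φ (e i * e j) = if i = j then 1 else 0) (hcC : ∀ v, Commute lC v)
    (u : 𝔸) (k l : I) :
    ∑ a, φ (u * e a) * frobeniusC φ e lC a k l = φ (u * (lC * (e k * e l + e l * e k))) := by
  simp only [frobeniusC, trace_central_mul_anticommutator_mul htr hcC,
    sum_trace_mul_basis_mul horth]

theorem sum_mul_frobeniusA_upper (htr : ∀ v w, φ (v * w) = φ (w * v))
    (horth : ∀ i j, φ (e i * e j) = if i = j then 1 else 0) (u : 𝔸) (k l : I) :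
    ∑ a, φ (u * e a) * frobeniusA φ e lA a k l = φ (u * (lA * (e k * e l + e l * e k))) := by
  simp only [frobeniusA, htr (lA * _) (e _), sum_trace_mul_basis_mul horth]

theorem sum_mul_frobeniusA_lower (htr : ∀ v w, φ (v * w) = φ (w * v))
    (horth : ∀ i j, φ (e i * e j) = if i = j then 1 else 0) (hcA : ∀ v, Commute lA v)
    (u : 𝔸) (j k : I) :
    ∑ a, φ (u * e a) * frobeniusA φ e lA j a k = φ (u * (lA * (e k * e j + e j * e k))) := by
  simp only [frobeniusA, trace_central_mul_anticommutator_mul htr hcA,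
    sum_trace_mul_basis_mul horth]

theorem sum_mul_frobeniusA_lower' (htr : ∀ v w, φ (v * w) = φ (w * v))
    (horth : ∀ i j, φ (e i * e j) = if i = j then 1 else 0) (hcA : ∀ v, Commute lA v)
    (u : 𝔸) (j k : I) :
    ∑ a, φ (u * e a) * frobeniusA φ e lA j k a = φ (u * (lA * (e j * e k + e k * e j))) := by
  simp only [frobeniusA, trace_central_mul_anticommutator_mul' htr hcA,
    sum_trace_mul_basis_mul horth]

end Contractions

section FrobeniusRelations

variable {𝔸 I : Type*} [NonUnitalRing 𝔸] [Module ℂ 𝔸] [SMulCommClass ℂ 𝔸 𝔸]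
  [Fintype I] [DecidableEq I] {φ : 𝔸 →ₗ[ℂ] ℂ} {e : Module.Basis I ℂ 𝔸} {lA lB lC : 𝔸}

theorem relBBAC_frobenius (htr : ∀ v w, φ (v * w) = φ (w * v))
    (horth : ∀ i j, φ (e i * e j) = if i = j then 1 else 0)
    (hcA : ∀ v, Commute lA v) (hcB : ∀ v, Commute lB v) (hrel : lB * lB + lA * lC = 0) :
    RelBBAC (frobeniusA φ e lA) (frobeniusB φ e lB) (frobeniusC φ e lC) := by
  intro i j k l
  have hCA : lC * lA = -(lB * lB) := by
    rw [← (hcA lC).eq]; exact eq_neg_of_add_eq_zero_right hrel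
  have key := trace_identity_BBAC (φ := φ ∘ₗ LinearMap.mulLeft ℂ (lB * lB))
    (trace_central_mul_comm htr fun v => (hcB v).mul_left (hcB v)) (e i) (e j) (e k) (e l)
  simp only [LinearMap.comp_apply, LinearMap.mulLeft_apply] at key
  simp only [Finset.sum_add_distrib, sum_mul_frobeniusB_upper htr horth hcB,
    sum_mul_frobeniusB_lower htr horth hcB, sum_mul_frobeniusA_lower htr horth hcA,
    (hcB _).symm.mul_mul_mul_comm, (hcA _).symm.mul_mul_mul_comm, hCA, neg_mul, map_neg]
  linear_combination key

theorem relBC_frobenius (htr : ∀ v w, φ (v * w) = φ (w * v))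
    (horth : ∀ i j, φ (e i * e j) = if i = j then 1 else 0)
    (hcB : ∀ v, Commute lB v) (hcC : ∀ v, Commute lC v) :
    RelBC (frobeniusB φ e lB) (frobeniusC φ e lC) := by
  intro i j k l
  have key := trace_identity_BC (φ := φ ∘ₗ LinearMap.mulLeft ℂ (lB * lC))
    (trace_central_mul_comm htr fun v => (hcB v).mul_left (hcC v)) (e i) (e j) (e k) (e l)
  simp only [LinearMap.comp_apply, LinearMap.mulLeft_apply] at key
  simp only [Finset.sum_add_distrib, sum_mul_frobeniusC_upper htr horth hcC,
    sum_mul_frobeniusB_lower htr horth hcB, (hcB _).symm.mul_mul_mul_comm,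
    (hcC _).symm.mul_mul_mul_comm, (hcC lB).eq]
  linear_combination key

theorem relBA_frobenius (htr : ∀ v w, φ (v * w) = φ (w * v))
    (horth : ∀ i j, φ (e i * e j) = if i = j then 1 else 0)
    (hcA : ∀ v, Commute lA v) (hcB : ∀ v, Commute lB v) :
    RelBA (frobeniusA φ e lA) (frobeniusB φ e lB) := by
  intro i j k l
  have key := trace_identity_BA (φ := φ ∘ₗ LinearMap.mulLeft ℂ (lB * lA))
    (trace_central_mul_comm htr fun v => (hcB v).mul_left (hcA v)) (e i) (e j) (e k) (e l)
  simp only [LinearMap.comp_apply, LinearMap.mulLeft_apply] at key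
  simp only [Finset.sum_add_distrib, sum_mul_frobeniusA_upper htr horth,
    sum_mul_frobeniusA_lower htr horth hcA, (hcA _).symm.mul_mul_mul_comm]
  linear_combination key

theorem sum_sum_frobeniusC_mul_frobeniusA_comm (htr : ∀ v w, φ (v * w) = φ (w * v))
    (horth : ∀ i j, φ (e i * e j) = if i = j then 1 else 0)
    (hcA : ∀ v, Commute lA v) (hcC : ∀ v, Commute lC v) (i j : I) :
    ∑ a, ∑ b, frobeniusC φ e lC i a b * frobeniusA φ e lA j a b
      = ∑ a, ∑ b, frobeniusC φ e lC j a b * frobeniusA φ e lA i a b := by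
  simp only [sum_mul_frobeniusA_lower' htr horth hcA, (hcA _).symm.mul_mul_mul_comm,
    trace_central_mul_comm htr fun v => (hcC v).mul_left (hcA v)]

theorem relD_frobenius_iff [IsScalarTower ℂ 𝔸 𝔸] (htr : ∀ v w, φ (v * w) = φ (w * v))
    (horth : ∀ i j, φ (e i * e j) = if i = j then 1 else 0)
    (hcA : ∀ v, Commute lA v) (hcB : ∀ v, Commute lB v) (hcC : ∀ v, Commute lC v) (D : I → ℂ) :
    RelD (frobeniusA φ e lA) (frobeniusB φ e lB) (frobeniusC φ e lC) D
      ↔ ∀ v w, φ (lB * (∑ a, D a • e a) * (v * w - w * v)) = 0 := by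
  have hBD (i j : I) : ∑ a, frobeniusB φ e lB i j a * D a
      = φ (lB * (∑ a, D a • e a) * (e i * e j - e j * e i)) := by
    rw [sum_trace_mul_mul_eq_trace_mul_sum_smul, mul_assoc, trace_central_mul_comm htr hcB,
      ← mul_assoc]
  rw [forall_trace_mul_commutator_eq_zero_iff (e := e)]
  refine forall₂_congr fun i j => ?_
  rw [hBD, hBD, sum_sum_frobeniusC_mul_frobeniusA_comm htr horth hcA hcC i j, add_left_inj,
    ← neg_sub (e i * e j), mul_neg, map_neg, self_eq_neg]

end FrobeniusRelations

theorem stmt12_general {I : Type*} [Fintype I] [DecidableEq I]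
    {𝔸 : Type*} [NonUnitalRing 𝔸] [Module ℂ 𝔸]
    [SMulCommClass ℂ 𝔸 𝔸] [IsScalarTower ℂ 𝔸 𝔸]
    (φ : 𝔸 →ₗ[ℂ] ℂ)
    (htr : ∀ v w : 𝔸, φ (v * w) = φ (w * v))
    (e : Module.Basis I ℂ 𝔸)
    (horth : ∀ i j, φ (e i * e j) = if i = j then 1 else 0)
    (lA lB lC : 𝔸)
    (hcA : ∀ v : 𝔸, lA * v = v * lA) (hcB : ∀ v : 𝔸, lB * v = v * lB)
    (hcC : ∀ v : 𝔸, lC * v = v * lC)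
    (hrel : lB * lB + lA * lC = 0) :
    (∀ i j k, φ (lA * (e j * e k + e k * e j) * e i) = φ (lA * (e k * e j + e j * e k) * e i))
    ∧ (∀ i j k, φ (lA * (e j * e k + e k * e j) * e i) = φ (lA * (e i * e k + e k * e i) * e j))
    ∧ (∀ i j k, φ (lC * (e i * e j + e j * e i) * e k) = φ (lC * (e i * e k + e k * e i) * e j))
    ∧ RelBBAC (fun i j k => φ (lA * (e j * e k + e k * e j) * e i))
        (fun i j k => φ (lB * (e i * e j - e j * e i) * e k))
        (fun i j k => φ (lC * (e i * e j + e j * e i) * e k))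
    ∧ RelBC (fun i j k => φ (lB * (e i * e j - e j * e i) * e k))
        (fun i j k => φ (lC * (e i * e j + e j * e i) * e k))
    ∧ RelBA (fun i j k => φ (lA * (e j * e k + e k * e j) * e i))
        (fun i j k => φ (lB * (e i * e j - e j * e i) * e k))
    ∧ (∀ D : I → ℂ,
        RelD (fun i j k => φ (lA * (e j * e k + e k * e j) * e i))
          (fun i j k => φ (lB * (e i * e j - e j * e i) * e k))
          (fun i j k => φ (lC * (e i * e j + e j * e i) * e k)) D
        ↔ ∀ v w : 𝔸, φ (lB * (∑ a, D a • e a) * (v * w - w * v)) = 0) :=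
  ⟨fun i j k => by rw [add_comm (e j * e k)],
    frobeniusA_comm_upper htr hcA,
    frobeniusC_comm_lower htr hcC,
    relBBAC_frobenius htr horth hcA hcB hrel,
    relBC_frobenius htr horth hcB hcC,
    relBA_frobenius htr horth hcA hcB,
    relD_frobenius_iff htr horth hcA hcB hcC⟩

/-- Let `𝔸` be a non-commutative Frobenius algebra over `ℂ`: a finite-dimensional
associative `ℂ`-algebra with a trace form `φ` (`φ(vw) = φ(wv)`) whose pairing is
nondegenerate, and let `(e_i)` be an orthonormal basis.  For central elements
`λ_A, λ_B, λ_C` with `λ_B² + λ_A λ_C = 0`, the tensors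
`A^i_{jk} = φ(λ_A {e_j,e_k} e_i)`, `B^i_{jk} = φ(λ_B [e_i,e_j] e_k)`,
`C^i_{jk} = φ(λ_C {e_i,e_j} e_k)` satisfy: `A` fully symmetric, `C` symmetric in its
lower indices, the relations (BB-AC), (BC), (BA); and `D` satisfies the (D) relation iff
`φ(λ_B (Σ_a D^a e_a) [v,w]) = 0` for all `v, w ∈ 𝔸`. -/
theorem stmt12 {I : Type*} [Fintype I] [DecidableEq I]
    {𝔸 : Type*} [NonUnitalRing 𝔸] [Module ℂ 𝔸]
    [SMulCommClass ℂ 𝔸 𝔸] [IsScalarTower ℂ 𝔸 𝔸] [FiniteDimensional ℂ 𝔸]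
    (φ : 𝔸 →ₗ[ℂ] ℂ)
    (htr : ∀ v w : 𝔸, φ (v * w) = φ (w * v))
    (hnd : ∀ v : 𝔸, (∀ w : 𝔸, φ (v * w) = 0) → v = 0)
    (e : Module.Basis I ℂ 𝔸)
    (horth : ∀ i j, φ (e i * e j) = if i = j then 1 else 0)
    (lA lB lC : 𝔸)
    (hcA : ∀ v : 𝔸, lA * v = v * lA) (hcB : ∀ v : 𝔸, lB * v = v * lB)
    (hcC : ∀ v : 𝔸, lC * v = v * lC)
    (hrel : lB * lB + lA * lC = 0) :
    (∀ i j k, φ (lA * (e j * e k + e k * e j) * e i) = φ (lA * (e k * e j + e j * e k) * e i))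
    ∧ (∀ i j k, φ (lA * (e j * e k + e k * e j) * e i) = φ (lA * (e i * e k + e k * e i) * e j))
    ∧ (∀ i j k, φ (lC * (e i * e j + e j * e i) * e k) = φ (lC * (e i * e k + e k * e i) * e j))
    ∧ RelBBAC (fun i j k => φ (lA * (e j * e k + e k * e j) * e i))
        (fun i j k => φ (lB * (e i * e j - e j * e i) * e k))
        (fun i j k => φ (lC * (e i * e j + e j * e i) * e k))
    ∧ RelBC (fun i j k => φ (lB * (e i * e j - e j * e i) * e k))
        (fun i j k => φ (lC * (e i * e j + e j * e i) * e k))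
    ∧ RelBA (fun i j k => φ (lA * (e j * e k + e k * e j) * e i))
        (fun i j k => φ (lB * (e i * e j - e j * e i) * e k))
    ∧ (∀ D : I → ℂ,
        RelD (fun i j k => φ (lA * (e j * e k + e k * e j) * e i))
          (fun i j k => φ (lB * (e i * e j - e j * e i) * e k))
          (fun i j k => φ (lC * (e i * e j + e j * e i) * e k)) D
        ↔ ∀ v w : 𝔸, φ (lB * (∑ a, D a • e a) * (v * w - w * v)) = 0) :=
  stmt12_general φ htr e horth lA lB lC hcA hcB hcC hrel
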